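/- arXiv:0704.2488 — 2 statements merged into one kernel-verified Lean document; each statement's English description precedes it below -/
import Mathlib

section
/- For every integer σ ≥ 1 there exists a constant C_σ > 0 such that for all r₁, r₂ ≥ 0: Q_σ(r₁,r₂) ≥ C_σ ( r₁^{σ−1} + r₂^{σ−1} ). -/
open MeasureTheory Filter Set
open scoped ENNReal FourierTransform

noncomputable section

/-- `ℝ^n`. -/
abbrev Rn (n : ℕ) := EuclideanSpace ℝ (Fin n)

variable {n : ℕ}

/-- Partial derivative `∂_i` of a complex-valued function on `ℝ^n`. -/
def pd (i : Fin n) (f : Rn n → ℂ) : Rn n → ℂ :=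
  fun x => fderiv ℝ f x (EuclideanSpace.single i 1)

/-- Partial derivative `∂_i` of a real-valued function on `ℝ^n`. -/
def pdR (i : Fin n) (f : Rn n → ℝ) : Rn n → ℝ :=
  fun x => fderiv ℝ f x (EuclideanSpace.single i 1)

/-- Laplacian of a complex-valued function. -/
def lap (f : Rn n → ℂ) : Rn n → ℂ := fun x => ∑ i, pd i (pd i f) x

/-- Laplacian of a real-valued function. -/
def lapR (f : Rn n → ℝ) : Rn n → ℝ := fun x => ∑ i, pdR i (pdR i f) x

/-- Sobolev `H^k` norm (for smooth functions): `(Σ_{j≤k} ‖D^j f‖_{L²}²)^{1/2}`. -/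
def HkNorm (k : ℕ) (f : Rn n → ℂ) : ℝ≥0∞ :=
  (∑ j ∈ Finset.range (k+1),
    (eLpNorm (fun x => ‖iteratedFDeriv ℝ j f x‖) 2 volume)^2) ^ (1/2 : ℝ)

/-- Sobolev `H^k` norm of a real-valued function. -/
def HkNormR (k : ℕ) (f : Rn n → ℝ) : ℝ≥0∞ :=
  (∑ j ∈ Finset.range (k+1),
    (eLpNorm (fun x => ‖iteratedFDeriv ℝ j f x‖) 2 volume)^2) ^ (1/2 : ℝ)

/-- Membership in `H^k(ℝ^n)` (smooth model). -/
def InHk (k : ℕ) (f : Rn n → ℂ) : Prop := ContDiff ℝ k f ∧ HkNorm k f < ⊤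

/-- Membership in `H^∞(ℝ^n) = ∩_k H^k(ℝ^n)`. -/
def InHinf (f : Rn n → ℂ) : Prop := ∀ k, InHk k f

def InHkR (k : ℕ) (f : Rn n → ℝ) : Prop := ContDiff ℝ k f ∧ HkNormR k f < ⊤

def InHinfR (f : Rn n → ℝ) : Prop := ∀ k, InHkR k f

/-- `u ∈ C(S; H^∞(ℝ^n))` for a time set `S ⊆ ℝ`. -/
def ContHinfOn (S : Set ℝ) (u : ℝ → Rn n → ℂ) : Prop :=
  (∀ t ∈ S, InHinf (u t)) ∧
  ∀ k : ℕ, ∀ t ∈ S,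
    Tendsto (fun s => HkNorm k (fun x => u s x - u t x)) (nhdsWithin t S) (nhds 0)

def ContHinfOnR (S : Set ℝ) (φ : ℝ → Rn n → ℝ) : Prop :=
  (∀ t ∈ S, InHinfR (φ t)) ∧
  ∀ k : ℕ, ∀ t ∈ S,
    Tendsto (fun s => HkNormR k (fun x => φ s x - φ t x)) (nhdsWithin t S) (nhds 0)

/-- The Cauchy problem (NLS_ε): `iε ∂_t u + (ε²/2) Δu = |u|^{2σ} u` on the time set `S`,
with initial datum `u0`. -/
def IsNLS (σ n : ℕ) (ε : ℝ) (u0 : Rn n → ℂ) (S : Set ℝ) (u : ℝ → Rn n → ℂ) : Prop :=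
  (∀ x, u 0 x = u0 x) ∧
  ∀ t ∈ S, ∀ x,
    Complex.I * ε * derivWithin (fun s => u s x) S t + (ε^2/2) * lap (u t) x
      = ((‖u t x‖ : ℝ) : ℂ)^(2*σ) * u t x

/-- The WKB initial datum `a_0^ε e^{iφ_0/ε}`. -/
def WKBdatum (n : ℕ) (a0e : ℝ → Rn n → ℂ) (φ0 : Rn n → ℝ) (ε : ℝ) : Rn n → ℂ :=
  fun x => a0e ε x * Complex.exp (Complex.I * (φ0 x) / ε)

/-- The limit system (E):
`∂_t φ + |∇φ|²/2 + |a|^{2σ} = 0`, `∂_t a + ∇φ·∇a + aΔφ/2 = 0` on the time set `S`. -/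
def IsLimit (σ n : ℕ) (φ0 : Rn n → ℝ) (a0 : Rn n → ℂ) (S : Set ℝ)
    (φ : ℝ → Rn n → ℝ) (a : ℝ → Rn n → ℂ) : Prop :=
  (∀ x, φ 0 x = φ0 x) ∧ (∀ x, a 0 x = a0 x) ∧
  ∀ t ∈ S, ∀ x,
    (derivWithin (fun s => φ s x) S t + (1/2) * ∑ i, (pdR i (φ t) x)^2
       + (‖a t x‖)^(2*σ) = 0) ∧
    (derivWithin (fun s => a s x) S t + (∑ i, (pdR i (φ t) x : ℂ) * pd i (a t) x)
       + (1/2) * a t x * (lapR (φ t) x : ℂ) = 0)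

/-- Assumption (A). -/
def AssumpA (n : ℕ) (a0e : ℝ → Rn n → ℂ) (a0 : Rn n → ℂ) (φ0 : Rn n → ℝ) : Prop :=
  InHinf a0 ∧ InHinfR φ0 ∧ (∀ ε ∈ Ioc (0:ℝ) 1, InHinf (a0e ε)) ∧
  ∀ k : ℕ, ∃ C : ℝ, ∀ ε ∈ Ioc (0:ℝ) 1,
    HkNorm k (fun x => a0e ε x - a0 x) ≤ ENNReal.ofReal (C * ε)

/-- Assumption (A'): Assumption (A) together with a first order expansion
`a_0^ε = a_0 + ε a_1 + O(ε²)`. -/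
def AssumpA' (n : ℕ) (a0e : ℝ → Rn n → ℂ) (a0 : Rn n → ℂ) (φ0 : Rn n → ℝ)
    (a1 : Rn n → ℂ) : Prop :=
  AssumpA n a0e a0 φ0 ∧ InHinf a1 ∧
  ∀ k : ℕ, ∃ C : ℝ, ∀ ε ∈ Ioc (0:ℝ) 1,
    HkNorm k (fun x => a0e ε x - a0 x - (ε:ℂ) * a1 x) ≤ ENNReal.ofReal (C * ε^2)

/-- The admissible Sobolev indices `k` in the main theorem. -/
def goodIndex (σ n k : ℕ) : Prop :=
  σ = 1 ∨ (σ = 2 ∧ n = 1 ∧ k = 2) ∨ (σ = 2 ∧ 2 ≤ n ∧ k = 1) ∨ (3 ≤ σ ∧ k = σ)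

/-- `Q_σ(r₁,r₂) = 2σ ∫₀¹ (1-s)(r₂+s(r₁-r₂))^{σ-1} ds`. -/
def Qs (σ : ℕ) (r1 r2 : ℝ) : ℝ :=
  2 * σ * ∫ s in (0:ℝ)..1, (1 - s) * (r2 + s * (r1 - r2))^(σ - 1)

/-- `B_σ(r₁,r₂) = (r₁-r₂)√(Q_σ(r₁,r₂))`. -/
def Bs (σ : ℕ) (r1 r2 : ℝ) : ℝ := (r1 - r2) * Real.sqrt (Qs σ r1 r2)

/-- `P_σ(r₁,r₂) = Σ_{ℓ<σ} r₁^{σ-1-ℓ} r₂^ℓ`. -/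
def Ps (σ : ℕ) (r1 r2 : ℝ) : ℝ := ∑ l ∈ Finset.range σ, r1^(σ - 1 - l) * r2^l

/-- `G_σ(r₁,r₂) = P_σ(r₁,r₂)/√(Q_σ(r₁,r₂))` (with the convention `G_σ(0,0) = 0` for `σ ≥ 2`,
which holds automatically since `0/0 = 0` and `P_σ(0,0) = 0`). -/
def Gs (σ : ℕ) (r1 r2 : ℝ) : ℝ := Ps σ r1 r2 / Real.sqrt (Qs σ r1 r2)

end

/-!
Along the segment the integrand is `(1 - s) (s r₁ + (1 - s) r₂)^(σ-1)`, and
`(x + y)^k ≥ (x^k + y^k) / 2` for `x, y ≥ 0`. Integrating the two resulting monomials against the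
weight `1 - s` gives `Q_σ(r₁, r₂) ≥ (r₁^(σ-1) + σ r₂^(σ-1)) / (σ + 1)`.
-/

open intervalIntegral

lemma pow_add_pow_le_two_mul_add_pow {R : Type*} [CommSemiring R] [PartialOrder R]
    [IsOrderedRing R] {x y : R} (hx : 0 ≤ x) (hy : 0 ≤ y) (k : ℕ) :
    x ^ k + y ^ k ≤ 2 * (x + y) ^ k := by
  have hxk : x ^ k ≤ (x + y) ^ k := pow_le_pow_left₀ hx (le_add_of_nonneg_right hy) k
  have hyk : y ^ k ≤ (x + y) ^ k := pow_le_pow_left₀ hy (le_add_of_nonneg_left hx) k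
  rw [two_mul]
  exact add_le_add hxk hyk

lemma integral_one_sub_mul_pow (k : ℕ) :
    ∫ s in (0 : ℝ)..1, (1 - s) * s ^ k = 1 / ((k + 1) * (k + 2)) := by
  have hsplit : ∀ s : ℝ, (1 - s) * s ^ k = s ^ k - s ^ (k + 1) := fun s => by ring
  simp_rw [hsplit]
  rw [integral_sub (intervalIntegrable_pow k) (intervalIntegrable_pow (k + 1)),
    integral_pow, integral_pow]
  push_cast
  field_simp
  ring

lemma integral_one_sub_pow (k : ℕ) :
    ∫ s in (0 : ℝ)..1, (1 - s) ^ k = 1 / (k + 1) := by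
  rw [integral_comp_sub_left (fun s : ℝ => s ^ k), integral_pow]
  norm_num

lemma le_Qs_succ {r1 r2 : ℝ} (h1 : 0 ≤ r1) (h2 : 0 ≤ r2) (k : ℕ) :
    (r1 ^ k + (k + 1) * r2 ^ k) / (k + 2) ≤ Qs (k + 1) r1 r2 := by
  set f : ℝ → ℝ := fun s => (1 - s) * ((s * r1) ^ k + ((1 - s) * r2) ^ k)
  have hf : ∫ s in (0 : ℝ)..1, f s = (r1 ^ k + (k + 1) * r2 ^ k) / ((k + 1) * (k + 2)) := by
    have hexpand : ∀ s : ℝ, f s = r1 ^ k * ((1 - s) * s ^ k) + r2 ^ k * (1 - s) ^ (k + 1) :=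
      fun s => by simp only [f, mul_pow]; ring
    simp_rw [hexpand]
    rw [integral_add
        ((by fun_prop : Continuous fun s : ℝ => r1 ^ k * ((1 - s) * s ^ k)).intervalIntegrable 0 1)
        ((by fun_prop : Continuous fun s : ℝ => r2 ^ k * (1 - s) ^ (k + 1)).intervalIntegrable 0 1),
      intervalIntegral.integral_const_mul, intervalIntegral.integral_const_mul,
      integral_one_sub_mul_pow, integral_one_sub_pow]
    push_cast
    field_simp
    ring
  have hmono : ∫ s in (0 : ℝ)..1, f s
      ≤ ∫ s in (0 : ℝ)..1, 2 * ((1 - s) * (r2 + s * (r1 - r2)) ^ k) := by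
    refine integral_mono_on zero_le_one ((by fun_prop : Continuous f).intervalIntegrable 0 1)
      ((by fun_prop : Continuous _).intervalIntegrable 0 1) fun s hs => ?_
    have hs1 : 0 ≤ 1 - s := sub_nonneg.mpr hs.2
    have hsum : r2 + s * (r1 - r2) = s * r1 + (1 - s) * r2 := by ring
    rw [hsum, mul_left_comm]
    exact mul_le_mul_of_nonneg_left
      (pow_add_pow_le_two_mul_add_pow (mul_nonneg hs.1 h1) (mul_nonneg hs1 h2) k) hs1
  rw [intervalIntegral.integral_const_mul, hf] at hmono
  calc (r1 ^ k + (k + 1) * r2 ^ k) / (k + 2)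
      = (k + 1) * ((r1 ^ k + (k + 1) * r2 ^ k) / ((k + 1) * (k + 2))) := by
        field_simp
    _ ≤ (k + 1) * (2 * ∫ s in (0 : ℝ)..1, (1 - s) * (r2 + s * (r1 - r2)) ^ k) :=
        mul_le_mul_of_nonneg_left hmono (by positivity)
    _ = Qs (k + 1) r1 r2 := by
        rw [Qs, Nat.add_sub_cancel]
        push_cast
        ring

/-- estimate (4.4): the convexity lower bound
`Q_σ(r₁,r₂) ≥ C_σ (r₁^{σ-1} + r₂^{σ-1})` on `[0,∞)²`. -/
theorem Qs_lower_bound (σ : ℕ) (hσ : 1 ≤ σ) :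
    ∃ C : ℝ, 0 < C ∧ ∀ r1 r2 : ℝ, 0 ≤ r1 → 0 ≤ r2 →
      C * (r1^(σ - 1) + r2^(σ - 1)) ≤ Qs σ r1 r2 := by
  obtain ⟨k, rfl⟩ := Nat.exists_eq_add_of_le' hσ
  refine ⟨1 / (k + 2), by positivity, fun r1 r2 h1 h2 => ?_⟩
  have hr2 : 0 ≤ (k : ℝ) * r2 ^ k := by positivity
  calc 1 / ((k : ℝ) + 2) * (r1 ^ (k + 1 - 1) + r2 ^ (k + 1 - 1))
      ≤ (r1 ^ k + (k + 1) * r2 ^ k) / (k + 2) := by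
        rw [Nat.add_sub_cancel, one_div_mul_eq_div]
        gcongr
        linarith
    _ ≤ Qs (k + 1) r1 r2 := le_Qs_succ h1 h2 k
end

section
/- Let σ ≥ 1 be an integer. For every (r₁,r₂) ∈ [0,∞)² with (r₁,r₂) ≠ (0,0), the function B_σ is continuously differentiable on an open neighborhood of (r₁,r₂) in ℝ², and its partial derivatives satisfy at (r₁,r₂): B_σ(r₁,r₂) · ∂B_σ/∂r₁ (r₁,r₂) = r₁^σ − r₂^σ, and B_σ(r₁,r₂) · ∂B_σ/∂r₂ (r₁,r₂) = σ ( r₂^σ − r₂^{σ−1} r₁ ). -/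
open MeasureTheory Filter Set
open scoped ENNReal FourierTransform

/-! Up to the factor `2 / (σ + 1)`, `(r₁ - r₂)² Q_σ(r₁, r₂)` is the integral form of the Taylor
remainder of `x ↦ x ^ (σ + 1)` between `r₂` and `r₁`:
`(r₁ - r₂)² Q_σ = 2 (r₁^(σ+1) - r₂^(σ+1)) / (σ + 1) - 2 (r₁ - r₂) r₂^σ`.
Expanding the integrand shows that `Q_σ` is a polynomial in `(r₁, r₂)`, and it is positive near
any point of `[0,∞)² \ {0}`. There `B_σ` is smooth and `B_σ²` equals the right-hand side above,
so differentiating `B_σ² = …` gives `2 B_σ ∂B_σ = ∂(…)`, which is the claim. -/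

open scoped ContDiff Topology

theorem two_mul_mul_deriv_of_sq_eventuallyEq {𝕜 : Type*} [NontriviallyNormedField 𝕜]
    {f g : 𝕜 → 𝕜} {x g' : 𝕜} (hf : DifferentiableAt 𝕜 f x)
    (hfg : (fun y => f y ^ 2) =ᶠ[𝓝 x] g) (hg : HasDerivAt g g' x) :
    2 * (f x * deriv f x) = g' := by
  have h := (hf.hasDerivAt.fun_pow 2).unique (hg.congr_of_eventuallyEq hfg)
  rw [← h]
  ring

theorem Qs_eq_sum (σ : ℕ) (r1 r2 : ℝ) :
    Qs σ r1 r2 = 2 * σ * ∑ k ∈ Finset.range (σ - 1 + 1),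
      ((σ - 1).choose k * ∫ s in (0:ℝ)..1, (1 - s) * s ^ k) *
        (r1 - r2) ^ k * r2 ^ (σ - 1 - k) := by
  have expand : ∀ s : ℝ, (1 - s) * (r2 + s * (r1 - r2)) ^ (σ - 1) =
      ∑ k ∈ Finset.range (σ - 1 + 1),
        ((σ - 1).choose k * (r1 - r2) ^ k * r2 ^ (σ - 1 - k)) * ((1 - s) * s ^ k) := by
    intro s
    rw [add_comm, add_pow, Finset.mul_sum]
    exact Finset.sum_congr rfl fun k _ => by rw [mul_pow]; ring
  rw [Qs, funext expand, intervalIntegral.integral_finsetSum fun k _ =>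
    (by fun_prop : Continuous fun s : ℝ => _).intervalIntegrable 0 1]
  simp_rw [intervalIntegral.integral_const_mul]
  congr 1
  refine Finset.sum_congr rfl fun k _ => ?_
  ring

theorem contDiff_Qs (σ : ℕ) : ContDiff ℝ ∞ fun q : ℝ × ℝ => Qs σ q.1 q.2 := by
  simp_rw [Qs_eq_sum]
  fun_prop

theorem sq_sub_mul_Qs (m : ℕ) (r1 r2 : ℝ) :
    (r1 - r2) ^ 2 * Qs (m + 1) r1 r2 =
      2 * (r1 ^ (m + 2) - r2 ^ (m + 2)) / (m + 2) - 2 * (r1 - r2) * r2 ^ (m + 1) := by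
  set d := r1 - r2
  let u : ℝ → ℝ := fun s => (1 - s) * d * (r2 + s * d) ^ (m + 1) / (m + 1) +
    (r2 + s * d) ^ (m + 2) / ((m + 1) * (m + 2))
  have hu : ∀ s ∈ Set.uIcc (0:ℝ) 1, HasDerivAt u ((1 - s) * d ^ 2 * (r2 + s * d) ^ m) s := by
    intro s _
    have hline : HasDerivAt (fun s : ℝ => r2 + s * d) d s := by
      simpa using ((hasDerivAt_id s).mul_const d).const_add r2
    refine ((((hasDerivAt_id' s).const_sub 1).mul_const d).fun_mul (hline.fun_pow (m + 1))
      |>.div_const ((m:ℝ) + 1)).fun_add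
        ((hline.fun_pow (m + 2)).div_const (((m:ℝ) + 1) * (m + 2))) |>.congr_deriv ?_
    push_cast
    field_simp
    ring
  have ftc := intervalIntegral.integral_eq_sub_of_hasDerivAt hu <|
    (by fun_prop : Continuous fun s : ℝ => _).intervalIntegrable 0 1
  have hQ : d ^ 2 * Qs (m + 1) r1 r2 =
      2 * (m + 1) * ∫ s in (0:ℝ)..1, (1 - s) * d ^ 2 * (r2 + s * d) ^ m := by
    simp_rw [Qs, Nat.add_sub_cancel, mul_comm _ (d ^ 2), mul_assoc (d ^ 2),
      intervalIntegral.integral_const_mul]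
    push_cast
    ring
  rw [hQ, ftc]
  simp only [u, show r2 + 1 * d = r1 by ring]
  field_simp
  ring

theorem Qs_pos (m : ℕ) {r1 r2 : ℝ} (h1 : 0 ≤ r1) (h2 : 0 ≤ r2) (hne : (r1, r2) ≠ (0, 0)) :
    0 < Qs (m + 1) r1 r2 := by
  have hpos : 0 < r1 ∨ 0 < r2 := by
    contrapose! hne
    rw [le_antisymm hne.1 h1, le_antisymm hne.2 h2]
  refine mul_pos (by positivity) (intervalIntegral.intervalIntegral_pos_of_pos_on
    ((by fun_prop : Continuous fun s : ℝ => _).intervalIntegrable 0 1)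
    (fun s ⟨hs0, hs1⟩ => ?_) zero_lt_one)
  have hconvex : 0 < (1 - s) * r2 + s * r1 := by
    rcases hpos with h | h
    · exact add_pos_of_nonneg_of_pos (mul_nonneg (by linarith) h2) (mul_pos hs0 h)
    · exact add_pos_of_pos_of_nonneg (mul_pos (by linarith) h) (mul_nonneg hs0.le h1)
  exact mul_pos (by linarith) (pow_pos (by linarith) _)

theorem contDiffAt_Bs {σ : ℕ} {q : ℝ × ℝ} (hq : 0 < Qs σ q.1 q.2) :
    ContDiffAt ℝ ∞ (fun q : ℝ × ℝ => Bs σ q.1 q.2) q :=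
  (contDiffAt_fst.sub contDiffAt_snd).mul
    ((Real.contDiffAt_sqrt hq.ne').comp q (contDiff_Qs σ).contDiffAt)

theorem Bs_sq_eventuallyEq (m : ℕ) {r1 r2 : ℝ} (hQ : 0 < Qs (m + 1) r1 r2) :
    ∀ᶠ q : ℝ × ℝ in 𝓝 (r1, r2), Bs (m + 1) q.1 q.2 ^ 2 =
      2 * (q.1 ^ (m + 2) - q.2 ^ (m + 2)) / (m + 2) - 2 * (q.1 - q.2) * q.2 ^ (m + 1) := by
  filter_upwards [continuousAt_const.eventually_lt (contDiff_Qs (m + 1)).continuous.continuousAt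
    hQ] with q hq
  rw [Bs, mul_pow, Real.sq_sqrt hq.le, sq_sub_mul_Qs]

theorem Bs_mul_deriv_fst (m : ℕ) {r1 r2 : ℝ} (hQ : 0 < Qs (m + 1) r1 r2) :
    Bs (m + 1) r1 r2 * deriv (fun r => Bs (m + 1) r r2) r1 = r1 ^ (m + 1) - r2 ^ (m + 1) := by
  have hslice : Differentiable ℝ fun r : ℝ => (r, r2) := by fun_prop
  have hF : HasDerivAt
      (fun r => 2 * (r ^ (m + 2) - r2 ^ (m + 2)) / (m + 2) - 2 * (r - r2) * r2 ^ (m + 1))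
      (2 * (r1 ^ (m + 1) - r2 ^ (m + 1))) r1 := by
    refine ((((hasDerivAt_pow (m + 2) r1).sub_const _).const_mul 2).div_const _).fun_sub
      ((((hasDerivAt_id' r1).sub_const r2).const_mul 2).mul_const _) |>.congr_deriv ?_
    push_cast
    field_simp
  have h := two_mul_mul_deriv_of_sq_eventuallyEq (f := fun r => Bs (m + 1) r r2)
    (((contDiffAt_Bs hQ).differentiableAt (by simp)).comp r1 (hslice r1))
    ((hslice.continuous.tendsto r1).eventually (Bs_sq_eventuallyEq m hQ)) hF
  linarith

theorem Bs_mul_deriv_snd (m : ℕ) {r1 r2 : ℝ} (hQ : 0 < Qs (m + 1) r1 r2) :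
    Bs (m + 1) r1 r2 * deriv (fun r => Bs (m + 1) r1 r) r2 =
      (m + 1) * (r2 ^ (m + 1) - r2 ^ m * r1) := by
  have hslice : Differentiable ℝ fun r : ℝ => (r1, r) := by fun_prop
  have hF : HasDerivAt
      (fun r => 2 * (r1 ^ (m + 2) - r ^ (m + 2)) / (m + 2) - 2 * (r1 - r) * r ^ (m + 1))
      (2 * ((m + 1) * (r2 ^ (m + 1) - r2 ^ m * r1))) r2 := by
    refine ((((hasDerivAt_pow (m + 2) r2).const_sub _).const_mul 2).div_const _).fun_sub
      ((((hasDerivAt_id' r2).const_sub r1).const_mul 2).fun_mul (hasDerivAt_pow (m + 1) r2))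
      |>.congr_deriv ?_
    push_cast
    field_simp
    ring
  have h := two_mul_mul_deriv_of_sq_eventuallyEq (f := fun r => Bs (m + 1) r1 r)
    (((contDiffAt_Bs hQ).differentiableAt (by simp)).comp r2 (hslice r2))
    ((hslice.continuous.tendsto r2).eventually (Bs_sq_eventuallyEq m hQ)) hF
  linarith

/-- away from the origin in `[0,∞)²`, `B_σ` is `C¹` and satisfies
`B_σ ∂_{r₁}B_σ = r₁^σ - r₂^σ` and `B_σ ∂_{r₂}B_σ = σ(r₂^σ - r₂^{σ-1} r₁)`. -/
theorem Bs_derivative_identities (σ : ℕ) (hσ : 1 ≤ σ)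
    (r1 r2 : ℝ) (h1 : 0 ≤ r1) (h2 : 0 ≤ r2) (hne : (r1, r2) ≠ (0, 0)) :
    (∃ U : Set (ℝ × ℝ), IsOpen U ∧ (r1, r2) ∈ U ∧
      ContDiffOn ℝ 1 (fun q : ℝ × ℝ => Bs σ q.1 q.2) U) ∧
    Bs σ r1 r2 * deriv (fun r => Bs σ r r2) r1 = r1^σ - r2^σ ∧
    Bs σ r1 r2 * deriv (fun r => Bs σ r1 r) r2 = σ * (r2^σ - r2^(σ - 1) * r1) := by
  obtain ⟨m, rfl⟩ : ∃ m, σ = m + 1 := ⟨σ - 1, by omega⟩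
  have hQ : 0 < Qs (m + 1) r1 r2 := Qs_pos m h1 h2 hne
  refine ⟨⟨{q | 0 < Qs (m + 1) q.1 q.2}, isOpen_lt continuous_const (contDiff_Qs _).continuous,
    hQ, fun q hq => (contDiffAt_Bs hq).contDiffWithinAt.of_le (by simp)⟩,
    Bs_mul_deriv_fst m hQ, ?_⟩
  simpa using Bs_mul_deriv_snd m hQ
end
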